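/- arXiv:2005.12095 — 3 statements merged into one kernel-verified Lean document; each statement's English description precedes it below -/
import Mathlib

section
/- The bracket on ℝ^(4n+3) with basis {Z, Y_1, …, Y_{2n+1}, X_1, …, X_{2n+1}} defined by [X_j, X_{n+j}] = X_{2n+1}, [X_j, Y_{2n+1}] = -(1/2) Y_{n+j}, [X_{n+j}, Y_{2n+1}] = (1/2) Y_j (for j = 1,…,n), [X_k, Y_k] = Z (for k = 1,…,2n+1), and all other brackets of basis vectors zero, satisfies the Jacobi identity, hence defines a Lie algebra structure (the Dynin–Folland Lie algebra 𝔥_{n,2}). -/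
open scoped BigOperators

/-- The underlying vector space ℝ^(4n+3) of the Dynin–Folland Lie algebra,
written as (Z-coordinate, Y-coordinates, X-coordinates). -/
abbrev DF (n : ℕ) : Type := ℝ × (Fin (2*n+1) → ℝ) × (Fin (2*n+1) → ℝ)

/-- Index of `X_j` (resp. `Y_j`) for `j = 1,…,n` (0-based). -/
def idxL {n : ℕ} (j : Fin n) : Fin (2*n+1) := ⟨j.1, by omega⟩
/-- Index of `X_{n+j}` (resp. `Y_{n+j}`) for `j = 1,…,n` (0-based). -/
def idxR {n : ℕ} (j : Fin n) : Fin (2*n+1) := ⟨n + j.1, by omega⟩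
/-- Index of `X_{2n+1}` (resp. `Y_{2n+1}`) (0-based). -/
def lastIdx (n : ℕ) : Fin (2*n+1) := ⟨2*n, by omega⟩

/-- The Dynin–Folland bracket on ℝ^(4n+3), extended bilinearly and antisymmetrically from
`[X_j, X_{n+j}] = X_{2n+1}`, `[X_j, Y_{2n+1}] = -(1/2) Y_{n+j}`,
`[X_{n+j}, Y_{2n+1}] = (1/2) Y_j` (j = 1,…,n), `[X_k, Y_k] = Z` (k = 1,…,2n+1),
all other basis brackets zero. -/
noncomputable def dfBracket {n : ℕ} (v w : DF n) : DF n :=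
  ( ∑ k, (v.2.2 k * w.2.1 k - w.2.2 k * v.2.1 k),
    fun i =>
      (1/2) * ((∑ j : Fin n, if i = idxL j then
            v.2.2 (idxR j) * w.2.1 (lastIdx n) - w.2.2 (idxR j) * v.2.1 (lastIdx n) else 0)
        - (∑ j : Fin n, if i = idxR j then
            v.2.2 (idxL j) * w.2.1 (lastIdx n) - w.2.2 (idxL j) * v.2.1 (lastIdx n) else 0)),
    fun i => if i = lastIdx n then
      ∑ j : Fin n, (v.2.2 (idxL j) * w.2.2 (idxR j) - w.2.2 (idxL j) * v.2.2 (idxR j)) else 0 )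

/-- the Dynin–Folland bracket is bilinear, antisymmetric and satisfies the
Jacobi identity, hence defines a Lie algebra structure on ℝ^(4n+3). -/
theorem dfBracket_lie_algebra (n : ℕ) (hn : 1 ≤ n) :
    (∀ u v w : DF n, dfBracket (u + v) w = dfBracket u w + dfBracket v w) ∧
    (∀ u v w : DF n, dfBracket u (v + w) = dfBracket u v + dfBracket u w) ∧
    (∀ (c : ℝ) (u w : DF n), dfBracket (c • u) w = c • dfBracket u w) ∧
    (∀ (c : ℝ) (u w : DF n), dfBracket u (c • w) = c • dfBracket u w) ∧
    (∀ u w : DF n, dfBracket u w = - dfBracket w u) ∧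
    (∀ u v w : DF n,
      dfBracket u (dfBracket v w) + dfBracket v (dfBracket w u)
        + dfBracket w (dfBracket u v) = 0) := by
  have hL1 : ∀ j : Fin n, idxL j ≠ lastIdx n := by
    intro j; simp only [idxL, lastIdx, Fin.ext_iff, ne_eq]; omega
  have hR1 : ∀ j : Fin n, idxR j ≠ lastIdx n := by
    intro j; have := j.2; simp only [idxR, lastIdx, Fin.ext_iff, ne_eq]; omega
  have hL2 : ∀ j : Fin n, lastIdx n ≠ idxL j := fun j => (hL1 j).symm
  have hR2 : ∀ j : Fin n, lastIdx n ≠ idxR j := fun j => (hR1 j).symm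
  have keyY : ∀ a b c : DF n, ∀ i, (dfBracket a (dfBracket b c)).2.1 i = 0 := by
    intro a b c i
    simp [dfBracket, hL1, hR1, hL2, hR2]
  have keyX : ∀ a b c : DF n, ∀ i, (dfBracket a (dfBracket b c)).2.2 i = 0 := by
    intro a b c i
    simp [dfBracket, hL1, hR1, hL2, hR2]
  have swap : ∀ (f : Fin (2*n+1) → ℝ) (e : Fin n → Fin (2*n+1)) (g : Fin n → ℝ),
      (∑ k, f k * ∑ j, (if k = e j then g j else 0)) = ∑ j, f (e j) * g j := by
    intro f e g
    simp_rw [Finset.mul_sum]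
    rw [Finset.sum_comm]
    simp [mul_ite, mul_zero, Finset.sum_ite_eq']
  have keyZ : ∀ a b c : DF n, (dfBracket a (dfBracket b c)).1 =
      (1/2) * ((∑ j, a.2.2 (idxL j) *
          (b.2.2 (idxR j) * c.2.1 (lastIdx n) - c.2.2 (idxR j) * b.2.1 (lastIdx n)))
        - ∑ j, a.2.2 (idxR j) *
          (b.2.2 (idxL j) * c.2.1 (lastIdx n) - c.2.2 (idxL j) * b.2.1 (lastIdx n)))
      - (∑ j, (b.2.2 (idxL j) * c.2.2 (idxR j) - c.2.2 (idxL j) * b.2.2 (idxR j)))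
          * a.2.1 (lastIdx n) := by
    intro a b c
    show (∑ k, (a.2.2 k * (dfBracket b c).2.1 k - (dfBracket b c).2.2 k * a.2.1 k)) = _
    rw [Finset.sum_sub_distrib]
    congr 1
    · have h1 : ∀ k, a.2.2 k * (dfBracket b c).2.1 k =
          (1/2) * (a.2.2 k * ∑ j, (if k = idxL j then
              b.2.2 (idxR j) * c.2.1 (lastIdx n) - c.2.2 (idxR j) * b.2.1 (lastIdx n) else 0)
          - a.2.2 k * ∑ j, (if k = idxR j then
              b.2.2 (idxL j) * c.2.1 (lastIdx n) - c.2.2 (idxL j) * b.2.1 (lastIdx n) else 0)) := by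
        intro k; show a.2.2 k * ((1/2) * _) = _; ring
      simp_rw [h1]
      rw [← Finset.mul_sum, Finset.sum_sub_distrib, swap, swap]
    · show (∑ k, (if k = lastIdx n then _ else 0) * a.2.1 k) = _
      simp [ite_mul, Finset.sum_ite_eq']
  have bil : (∀ u v w : DF n, dfBracket (u + v) w = dfBracket u w + dfBracket v w) ∧
      (∀ u v w : DF n, dfBracket u (v + w) = dfBracket u v + dfBracket u w) ∧
      (∀ (c : ℝ) (u w : DF n), dfBracket (c • u) w = c • dfBracket u w) ∧
      (∀ (c : ℝ) (u w : DF n), dfBracket u (c • w) = c • dfBracket u w) ∧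
      (∀ u w : DF n, dfBracket u w = - dfBracket w u) := by
    refine ⟨fun u v w => ?_, fun u v w => ?_, fun c u w => ?_, fun c u w => ?_,
      fun u w => ?_⟩ <;>
    · refine Prod.ext ?_ (Prod.ext (funext fun i => ?_) (funext fun i => ?_)) <;>
      · simp only [dfBracket, Prod.fst_add, Prod.snd_add, Pi.add_apply, Prod.smul_fst,
          Prod.smul_snd, Pi.smul_apply, smul_eq_mul, Prod.fst_neg, Prod.snd_neg, Pi.neg_apply]
        try split_ifs
        all_goals first
          | (simp only [← Finset.sum_sub_distrib, Finset.mul_sum, ← Finset.sum_add_distrib,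
                ← Finset.sum_neg_distrib];
             exact Finset.sum_congr rfl fun j _ => by first | (split_ifs <;> ring) | ring)
          | simp
  refine ⟨bil.1, bil.2.1, bil.2.2.1, bil.2.2.2.1, bil.2.2.2.2, fun u v w => ?_⟩
  refine Prod.ext ?_ (Prod.ext (funext fun i => ?_) (funext fun i => ?_))
  · simp only [Prod.fst_add, keyZ, Prod.fst_zero]
    simp only [← Finset.sum_sub_distrib, Finset.mul_sum, Finset.sum_mul,
      ← Finset.sum_add_distrib]
    exact Finset.sum_eq_zero fun j _ => by ring
  · simp [Prod.snd_add, Pi.add_apply, keyY]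
  · simp [Prod.snd_add, Pi.add_apply, keyX]
end

section
/- With 𝔤_1 = span{Y_{2n+1}, X_1, …, X_{2n}}, 𝔤_2 = span{Y_1, …, Y_{2n}, X_{2n+1}}, and 𝔤_3 = ℝZ, the Dynin–Folland Lie algebra satisfies 𝔥_{n,2} = 𝔤_1 ⊕ 𝔤_2 ⊕ 𝔤_3 (direct sum of vector spaces), [𝔤_1, 𝔤_1] ⊆ 𝔤_2, [𝔤_1, 𝔤_2] ⊆ 𝔤_3, [𝔤_1, 𝔤_3] = 0, and 𝔤_1 generates 𝔥_{n,2} as a Lie algebra; i.e., this decomposition is a stratification. -/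
open scoped BigOperators

/-- The central basis vector `Z`. -/
def Zv (n : ℕ) : DF n := (1, 0, 0)
/-- The basis vector `Y_k`. -/
noncomputable def Yv {n : ℕ} (k : Fin (2*n+1)) : DF n := (0, Pi.single k 1, 0)
/-- The basis vector `X_k`. -/
noncomputable def Xv {n : ℕ} (k : Fin (2*n+1)) : DF n := (0, 0, Pi.single k 1)

/-- The first stratum 𝔤₁ = span{Y_{2n+1}, X_1, …, X_{2n}}. -/
noncomputable def g1 (n : ℕ) : Submodule ℝ (DF n) :=
  Submodule.span ℝ ({Yv (lastIdx n)} ∪ {v | ∃ k : Fin (2*n+1), k ≠ lastIdx n ∧ v = Xv k})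
/-- The second stratum 𝔤₂ = span{Y_1, …, Y_{2n}, X_{2n+1}}. -/
noncomputable def g2 (n : ℕ) : Submodule ℝ (DF n) :=
  Submodule.span ℝ ({Xv (lastIdx n)} ∪ {v | ∃ k : Fin (2*n+1), k ≠ lastIdx n ∧ v = Yv k})
/-- The third stratum 𝔤₃ = ℝZ. -/
noncomputable def g3 (n : ℕ) : Submodule ℝ (DF n) :=
  Submodule.span ℝ {Zv n}


section Aux
variable {n : ℕ}

-- index facts
lemma idxL_ne_last (j : Fin n) : idxL j ≠ lastIdx n := by
  have := j.2
  exact fun h => by have := congrArg Fin.val h; simp only [idxL, lastIdx] at this; omega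
lemma idxR_ne_last (j : Fin n) : idxR j ≠ lastIdx n := by
  have := j.2
  exact fun h => by have := congrArg Fin.val h; simp only [idxR, lastIdx] at this; omega
lemma idxL_ne_idxR (j j' : Fin n) : idxL j ≠ idxR j' := by
  have := j.2
  exact fun h => by have := congrArg Fin.val h; simp only [idxL, idxR] at this; omega
lemma idxL_inj {j j' : Fin n} : idxL j = idxL j' ↔ j = j' :=
  ⟨fun h => by simp only [idxL, Fin.mk.injEq] at h; exact Fin.ext h, fun h => by rw [h]⟩
lemma idxR_inj {j j' : Fin n} : idxR j = idxR j' ↔ j = j' :=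
  ⟨fun h => by simp only [idxR, Fin.mk.injEq] at h; exact Fin.ext (by omega), fun h => by rw [h]⟩

-- Pi.single evaluation facts
lemma sLL (j j' : Fin n) : (Pi.single (idxL j) (1:ℝ) : Fin (2*n+1) → ℝ) (idxL j') = if j' = j then 1 else 0 := by
  rcases eq_or_ne j' j with h | h
  · subst h; simp
  · rw [if_neg h, Pi.single_eq_of_ne (M := fun _ : Fin (2*n+1) => ℝ) (fun hc => h (idxL_inj.mp hc))]
lemma sRR (j j' : Fin n) : (Pi.single (idxR j) (1:ℝ) : Fin (2*n+1) → ℝ) (idxR j') = if j' = j then 1 else 0 := by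
  rcases eq_or_ne j' j with h | h
  · subst h; simp
  · rw [if_neg h, Pi.single_eq_of_ne (M := fun _ : Fin (2*n+1) => ℝ) (fun hc => h (idxR_inj.mp hc))]
lemma sLR (j j' : Fin n) : (Pi.single (idxL j) (1:ℝ) : Fin (2*n+1) → ℝ) (idxR j') = 0 :=
  by exact Pi.single_eq_of_ne (M := fun _ : Fin (2*n+1) => ℝ) (idxL_ne_idxR j j').symm (1:ℝ)
lemma sRL (j j' : Fin n) : (Pi.single (idxR j) (1:ℝ) : Fin (2*n+1) → ℝ) (idxL j') = 0 :=
  by exact Pi.single_eq_of_ne (M := fun _ : Fin (2*n+1) => ℝ) (idxL_ne_idxR j' j) (1:ℝ)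
lemma sLlast (j : Fin n) : (Pi.single (idxL j) (1:ℝ) : Fin (2*n+1) → ℝ) (lastIdx n) = 0 :=
  by exact Pi.single_eq_of_ne (M := fun _ : Fin (2*n+1) => ℝ) (idxL_ne_last j).symm (1:ℝ)
lemma sRlast (j : Fin n) : (Pi.single (idxR j) (1:ℝ) : Fin (2*n+1) → ℝ) (lastIdx n) = 0 :=
  by exact Pi.single_eq_of_ne (M := fun _ : Fin (2*n+1) => ℝ) (idxR_ne_last j).symm (1:ℝ)
lemma slastL (j : Fin n) : (Pi.single (lastIdx n) (1:ℝ) : Fin (2*n+1) → ℝ) (idxL j) = 0 :=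
  by exact Pi.single_eq_of_ne (M := fun _ : Fin (2*n+1) => ℝ) (idxL_ne_last j) (1:ℝ)
lemma slastR (j : Fin n) : (Pi.single (lastIdx n) (1:ℝ) : Fin (2*n+1) → ℝ) (idxR j) = 0 :=
  by exact Pi.single_eq_of_ne (M := fun _ : Fin (2*n+1) => ℝ) (idxR_ne_last j) (1:ℝ)

lemma smul_single_one (k : Fin (2*n+1)) (r : ℝ) :
    r • (Pi.single k (1:ℝ) : Fin (2*n+1) → ℝ) = Pi.single k r := by
  rw [← Pi.single_smul, smul_eq_mul, mul_one]

/-- decomposition of an arbitrary vector into basis vectors -/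
lemma decomp (v : DF n) :
    v = v.1 • Zv n + (∑ k, v.2.1 k • Yv k) + (∑ k, v.2.2 k • Xv k) := by
  have hY : (∑ k, v.2.1 k • Yv k) = ((0:ℝ), v.2.1, (0 : Fin (2*n+1) → ℝ)) := by
    refine Prod.ext ?_ (Prod.ext ?_ ?_)
    · simp [Yv, Prod.fst_sum]
    · rw [Prod.snd_sum, Prod.fst_sum]
      have : ∀ k, (v.2.1 k • Yv k).2.1 = Pi.single k (v.2.1 k) := fun k => by
        simp [Yv, smul_single_one]
      simp_rw [this]
      exact Finset.univ_sum_single v.2.1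
    · simp [Yv, Prod.snd_sum]
  have hX : (∑ k, v.2.2 k • Xv k) = ((0:ℝ), (0 : Fin (2*n+1) → ℝ), v.2.2) := by
    refine Prod.ext ?_ (Prod.ext ?_ ?_)
    · simp [Xv, Prod.fst_sum]
    · simp [Xv, Prod.snd_sum, Prod.fst_sum]
    · rw [Prod.snd_sum, Prod.snd_sum]
      have : ∀ k, (v.2.2 k • Xv k).2.2 = Pi.single k (v.2.2 k) := fun k => by
        simp [Xv, smul_single_one]
      simp_rw [this]
      exact Finset.univ_sum_single v.2.2
  rw [hY, hX]
  refine Prod.ext ?_ (Prod.ext ?_ ?_) <;> simp [Zv]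

end Aux

section Part2
variable {n : ℕ}

/-- Coordinate description of 𝔤₁ (upper bound). -/
def G1 (n : ℕ) : Submodule ℝ (DF n) where
  carrier := {v | v.1 = 0 ∧ (∀ k, k ≠ lastIdx n → v.2.1 k = 0) ∧ v.2.2 (lastIdx n) = 0}
  add_mem' := by
    rintro a b ⟨ha1, ha2, ha3⟩ ⟨hb1, hb2, hb3⟩
    refine ⟨by simp [Prod.fst_add, ha1, hb1], fun k hk => ?_, ?_⟩
    · simp [Prod.snd_add, Prod.fst_add, ha2 k hk, hb2 k hk]
    · simp [Prod.snd_add, ha3, hb3]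
  zero_mem' := ⟨rfl, fun _ _ => rfl, rfl⟩
  smul_mem' := by
    rintro c a ⟨ha1, ha2, ha3⟩
    exact ⟨by simp [ha1], fun k hk => by simp [ha2 k hk], by simp [ha3]⟩

/-- Coordinate description of 𝔤₂ (upper bound). -/
def G2 (n : ℕ) : Submodule ℝ (DF n) where
  carrier := {v | v.1 = 0 ∧ v.2.1 (lastIdx n) = 0 ∧ ∀ k, k ≠ lastIdx n → v.2.2 k = 0}
  add_mem' := by
    rintro a b ⟨ha1, ha2, ha3⟩ ⟨hb1, hb2, hb3⟩
    refine ⟨by simp [Prod.fst_add, ha1, hb1], by simp [Prod.snd_add, Prod.fst_add, ha2, hb2],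
      fun k hk => by simp [Prod.snd_add, ha3 k hk, hb3 k hk]⟩
  zero_mem' := ⟨rfl, rfl, fun _ _ => rfl⟩
  smul_mem' := by
    rintro c a ⟨ha1, ha2, ha3⟩
    exact ⟨by simp [ha1], by simp [ha2], fun k hk => by simp [ha3 k hk]⟩

lemma g1_le : g1 n ≤ G1 n := by
  rw [g1, Submodule.span_le]
  rintro v (rfl | ⟨k, hk, rfl⟩)
  · exact ⟨rfl, fun k hk => Pi.single_eq_of_ne hk 1, rfl⟩
  · exact ⟨rfl, fun _ _ => rfl, Pi.single_eq_of_ne (Ne.symm hk) 1⟩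

lemma g2_le : g2 n ≤ G2 n := by
  rw [g2, Submodule.span_le]
  rintro v (rfl | ⟨k, hk, rfl⟩)
  · exact ⟨rfl, rfl, fun k hk => Pi.single_eq_of_ne hk 1⟩
  · exact ⟨rfl, Pi.single_eq_of_ne (Ne.symm hk) 1, fun _ _ => rfl⟩

lemma mem_g1_Y : Yv (lastIdx n) ∈ g1 n :=
  Submodule.subset_span (Or.inl rfl)
lemma mem_g1_X {k : Fin (2*n+1)} (hk : k ≠ lastIdx n) : Xv k ∈ g1 n :=
  Submodule.subset_span (Or.inr ⟨k, hk, rfl⟩)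

lemma mem_g2_of {v : DF n} (h1 : v.1 = 0) (h2 : v.2.1 (lastIdx n) = 0)
    (h3 : ∀ k, k ≠ lastIdx n → v.2.2 k = 0) : v ∈ g2 n := by
  rw [decomp v, h1, zero_smul, zero_add]
  refine add_mem (Submodule.sum_mem _ fun k _ => ?_) (Submodule.sum_mem _ fun k _ => ?_)
  · by_cases hk : k = lastIdx n
    · subst hk; rw [h2, zero_smul]; exact zero_mem _
    · exact Submodule.smul_mem _ _ (Submodule.subset_span (Or.inr ⟨k, hk, rfl⟩))
  · by_cases hk : k = lastIdx n
    · subst hk; exact Submodule.smul_mem _ _ (Submodule.subset_span (Or.inl rfl))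
    · rw [h3 k hk, zero_smul]; exact zero_mem _

lemma mem_g3_iff {v : DF n} : v ∈ g3 n ↔ ∃ c : ℝ, v = (c, 0, 0) := by
  rw [g3, Submodule.mem_span_singleton]
  constructor
  · rintro ⟨c, rfl⟩
    exact ⟨c, by refine Prod.ext ?_ (Prod.ext ?_ ?_) <;> simp [Zv]⟩
  · rintro ⟨c, rfl⟩
    exact ⟨c, by refine Prod.ext ?_ (Prod.ext ?_ ?_) <;> simp [Zv]⟩

end Part2

section Part3
variable {n : ℕ}

lemma brk_g1g1 {u v : DF n} (hu : u ∈ G1 n) (hv : v ∈ G1 n) : dfBracket u v ∈ g2 n := by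
  obtain ⟨hu1, hu2, hu3⟩ := hu
  obtain ⟨hv1, hv2, hv3⟩ := hv
  refine mem_g2_of ?_ ?_ ?_
  · simp only [dfBracket]
    refine Finset.sum_eq_zero fun k _ => ?_
    by_cases hk : k = lastIdx n
    · subst hk; rw [hu3, hv3]; ring
    · rw [hu2 k hk, hv2 k hk]; ring
  · simp only [dfBracket]
    rw [Finset.sum_eq_zero (fun j _ => if_neg (idxL_ne_last j).symm),
        Finset.sum_eq_zero (fun j _ => if_neg (idxR_ne_last j).symm)]
    ring
  · intro k hk
    simp only [dfBracket]
    rw [if_neg hk]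

lemma brk_g1g2 {u v : DF n} (hu : u ∈ G1 n) (hv : v ∈ G2 n) : dfBracket u v ∈ g3 n := by
  obtain ⟨hu1, hu2, hu3⟩ := hu
  obtain ⟨hv1, hv2, hv3⟩ := hv
  rw [mem_g3_iff]
  refine ⟨(dfBracket u v).1, Prod.ext rfl (Prod.ext ?_ ?_)⟩
  · funext i
    simp only [dfBracket]
    rw [Finset.sum_eq_zero (fun j _ => ?_), Finset.sum_eq_zero (fun j _ => ?_)]
    · show (1/2 : ℝ) * (0 - 0) = 0; ring
    · split
      · rw [hv2, hv3 _ (idxL_ne_last j)]; ring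
      · rfl
    · split
      · rw [hv2, hv3 _ (idxR_ne_last j)]; ring
      · rfl
  · funext i
    simp only [dfBracket]
    split
    · refine Finset.sum_eq_zero fun j _ => ?_
      rw [hv3 _ (idxR_ne_last j), hv3 _ (idxL_ne_last j)]; ring
    · rfl

lemma brk_g1g3 {u v : DF n} (hv : v ∈ g3 n) : dfBracket u v = 0 := by
  obtain ⟨c, rfl⟩ := mem_g3_iff.mp hv
  refine Prod.ext ?_ (Prod.ext ?_ ?_)
  · simp [dfBracket]
  · funext i
    simp [dfBracket]
  · funext i
    simp only [dfBracket]
    split <;> simp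

end Part3

section Part4
variable {n : ℕ}

lemma sum_swap_iteR (i : Fin (2*n+1)) (j : Fin n) (c : ℝ) :
    (∑ j' : Fin n, if i = idxR j' then (if j' = j then c else 0) else 0)
      = if i = idxR j then c else 0 := by
  rw [Finset.sum_congr rfl
    (g := fun j' => if j' = j then (if i = idxR j then c else 0) else 0)
    (fun j' _ => by rcases eq_or_ne j' j with rfl | h
                    · simp
                    · simp [h])]
  simp [Finset.sum_ite_eq']

lemma sum_swap_iteL (i : Fin (2*n+1)) (j : Fin n) (c : ℝ) :
    (∑ j' : Fin n, if i = idxL j' then (if j' = j then c else 0) else 0)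
      = if i = idxL j then c else 0 := by
  rw [Finset.sum_congr rfl
    (g := fun j' => if j' = j then (if i = idxL j then c else 0) else 0)
    (fun j' _ => by rcases eq_or_ne j' j with rfl | h
                    · simp
                    · simp [h])]
  simp [Finset.sum_ite_eq']


lemma brkB {n : ℕ} (j : Fin n) :
    dfBracket (Xv (idxL j)) (Yv (lastIdx n)) = (-(1/2) : ℝ) • Yv (idxR j) := by
  refine Prod.ext ?_ (Prod.ext ?_ ?_)
  · simp only [dfBracket, Xv, Yv, Prod.smul_mk, smul_zero]
    refine Finset.sum_eq_zero fun k _ => ?_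
    by_cases hk : k = idxL j
    · subst hk; simp [Pi.single_eq_of_ne (idxL_ne_last j)]
    · simp [Pi.single_eq_of_ne hk]
  · funext i
    simp [dfBracket, Xv, Yv, sLR, sLL, sRL, sRR, sLlast, sRlast]
    rw [sum_swap_iteR i j 1, Pi.single_apply]
  · funext i
    simp only [dfBracket, Xv, Yv, Pi.zero_apply, Prod.smul_mk, smul_zero]
    split <;> simp

lemma brkC {n : ℕ} (j : Fin n) :
    dfBracket (Xv (idxR j)) (Yv (lastIdx n)) = ((1/2) : ℝ) • Yv (idxL j) := by
  refine Prod.ext ?_ (Prod.ext ?_ ?_)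
  · simp only [dfBracket, Xv, Yv, Prod.smul_mk, smul_zero]
    refine Finset.sum_eq_zero fun k _ => ?_
    by_cases hk : k = idxR j
    · subst hk; simp [Pi.single_eq_of_ne (idxR_ne_last j)]
    · simp [Pi.single_eq_of_ne hk]
  · funext i
    simp [dfBracket, Xv, Yv, sLR, sLL, sRL, sRR, sLlast, sRlast]
    rw [sum_swap_iteL i j 1, Pi.single_apply]
  · funext i
    simp only [dfBracket, Xv, Yv, Pi.zero_apply, Prod.smul_mk, smul_zero]
    split <;> simp

lemma brkA {n : ℕ} (j : Fin n) :
    dfBracket (Xv (idxL j)) (Xv (idxR j)) = Xv (lastIdx n) := by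
  refine Prod.ext ?_ (Prod.ext ?_ ?_)
  · simp [dfBracket, Xv]
  · funext i; simp [dfBracket, Xv]
  · funext i
    simp [dfBracket, Xv, sLL, sRR, sLR, sRL]
    rw [Pi.single_apply]

lemma brkD {n : ℕ} (j : Fin n) :
    dfBracket (Xv (idxL j)) (Yv (idxL j)) = Zv n := by
  refine Prod.ext ?_ (Prod.ext ?_ ?_)
  · simp [dfBracket, Xv, Yv, Zv, Pi.single_apply]
  · funext i
    simp [dfBracket, Xv, Yv, Zv, sLlast]
  · funext i
    simp only [dfBracket, Xv, Yv, Zv, Pi.zero_apply]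
    split <;> simp

section Part5
variable {n : ℕ}

lemma gen_top (hn : 1 ≤ n) (S : Submodule ℝ (DF n)) (hS : g1 n ≤ S)
    (hbr : ∀ u v : DF n, u ∈ S → v ∈ S → dfBracket u v ∈ S) : S = ⊤ := by
  have hY : ∀ k, Yv k ∈ S := by
    intro k
    by_cases hk : k = lastIdx n
    · subst hk; exact hS mem_g1_Y
    · rcases lt_or_ge k.1 n with h | h
      · have hkL : k = idxL ⟨k.1, h⟩ := Fin.ext rfl
        rw [hkL]
        have hb := hbr _ _ (hS (mem_g1_X (idxR_ne_last ⟨k.1, h⟩))) (hS mem_g1_Y)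
        rw [brkC ⟨k.1, h⟩] at hb
        have h2 := S.smul_mem (2:ℝ) hb
        rwa [smul_smul, show (2:ℝ) * (1/2) = 1 by norm_num, one_smul] at h2
      · have hk2 : k.1 - n < n := by
          have h1 := k.2
          have h3 : k.1 ≠ 2*n := fun hc => hk (Fin.ext hc)
          omega
        have hkR : k = idxR ⟨k.1 - n, hk2⟩ := Fin.ext (by simp only [idxR]; omega)
        rw [hkR]
        have hb := hbr _ _ (hS (mem_g1_X (idxL_ne_last ⟨k.1 - n, hk2⟩))) (hS mem_g1_Y)
        rw [brkB ⟨k.1 - n, hk2⟩] at hb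
        have h2 := S.smul_mem (-2:ℝ) hb
        rwa [smul_smul, show (-2:ℝ) * (-(1/2)) = 1 by norm_num, one_smul] at h2
  have hX : ∀ k, Xv k ∈ S := by
    intro k
    by_cases hk : k = lastIdx n
    · subst hk
      have hb := hbr _ _ (hS (mem_g1_X (idxL_ne_last ⟨0, hn⟩))) (hS (mem_g1_X (idxR_ne_last ⟨0, hn⟩)))
      rwa [brkA ⟨0, hn⟩] at hb
    · exact hS (mem_g1_X hk)
  have hZ : Zv n ∈ S := by
    have hb := hbr _ _ (hX (idxL ⟨0, hn⟩)) (hY (idxL ⟨0, hn⟩))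
    rwa [brkD ⟨0, hn⟩] at hb
  rw [eq_top_iff]
  intro v _
  rw [decomp v]
  exact add_mem (add_mem (S.smul_mem _ hZ)
      (Submodule.sum_mem _ fun k _ => S.smul_mem _ (hY k)))
    (Submodule.sum_mem _ fun k _ => S.smul_mem _ (hX k))

end Part5

/-- 𝔥_{n,2} = 𝔤₁ ⊕ 𝔤₂ ⊕ 𝔤₃ is a stratification: a vector-space direct sum
with [𝔤₁,𝔤₁] ⊆ 𝔤₂, [𝔤₁,𝔤₂] ⊆ 𝔤₃, [𝔤₁,𝔤₃] = 0, and 𝔤₁ generates 𝔥_{n,2}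
as a Lie algebra. -/
theorem df_stratification (n : ℕ) (hn : 1 ≤ n) :
    (g1 n ⊔ g2 n ⊔ g3 n = ⊤) ∧
    (∀ a ∈ g1 n, ∀ b ∈ g2 n, ∀ c ∈ g3 n, a + b + c = 0 → a = 0 ∧ b = 0 ∧ c = 0) ∧
    (∀ u ∈ g1 n, ∀ v ∈ g1 n, dfBracket u v ∈ g2 n) ∧
    (∀ u ∈ g1 n, ∀ v ∈ g2 n, dfBracket u v ∈ g3 n) ∧
    (∀ u ∈ g1 n, ∀ v ∈ g3 n, dfBracket u v = 0) ∧
    (∀ S : Submodule ℝ (DF n), g1 n ≤ S →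
      (∀ u v : DF n, u ∈ S → v ∈ S → dfBracket u v ∈ S) → S = ⊤) := by
  refine ⟨?_, ?_, ?_, ?_, ?_, ?_⟩
  · rw [eq_top_iff]
    intro v _
    rw [decomp v]
    refine add_mem (add_mem (Submodule.smul_mem _ _ ?_)
        (Submodule.sum_mem _ fun k _ => Submodule.smul_mem _ _ ?_))
      (Submodule.sum_mem _ fun k _ => Submodule.smul_mem _ _ ?_)
    · exact Submodule.mem_sup_right (Submodule.subset_span rfl)
    · by_cases hk : k = lastIdx n
      · subst hk
        exact Submodule.mem_sup_left (Submodule.mem_sup_left mem_g1_Y)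
      · exact Submodule.mem_sup_left (Submodule.mem_sup_right
          (Submodule.subset_span (Or.inr ⟨k, hk, rfl⟩)))
    · by_cases hk : k = lastIdx n
      · subst hk
        exact Submodule.mem_sup_left (Submodule.mem_sup_right
          (Submodule.subset_span (Or.inl rfl)))
      · exact Submodule.mem_sup_left (Submodule.mem_sup_left (mem_g1_X hk))
  · intro a ha b hb c hc hsum
    obtain ⟨ha1, ha2, ha3⟩ := g1_le ha
    obtain ⟨hb1, hb2, hb3⟩ := g2_le hb
    obtain ⟨t, rfl⟩ := mem_g3_iff.mp hc
    have h1 : a.1 + b.1 + t = 0 := by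
      have := congrArg Prod.fst hsum
      simpa [Prod.fst_add] using this
    have ht : t = 0 := by rw [ha1, hb1] at h1; linarith
    have hyk : ∀ k, a.2.1 k + b.2.1 k = 0 := by
      intro k
      have := congrArg (fun v : DF n => v.2.1 k) hsum
      simpa [Prod.snd_add, Prod.fst_add] using this
    have hxk : ∀ k, a.2.2 k + b.2.2 k = 0 := by
      intro k
      have := congrArg (fun v : DF n => v.2.2 k) hsum
      simpa [Prod.snd_add] using this
    have hay : a.2.1 = 0 := funext fun k => by
      by_cases hk : k = lastIdx n
      · subst hk
        have := hyk (lastIdx n)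
        rw [hb2] at this
        simpa using this
      · exact ha2 k hk
    have hax : a.2.2 = 0 := funext fun k => by
      by_cases hk : k = lastIdx n
      · subst hk; exact ha3
      · have := hxk k
        rw [hb3 k hk] at this
        simpa using this
    have hby : b.2.1 = 0 := funext fun k => by
      by_cases hk : k = lastIdx n
      · subst hk; exact hb2
      · have := hyk k
        rw [ha2 k hk] at this
        simpa using this
    have hbx : b.2.2 = 0 := funext fun k => by
      by_cases hk : k = lastIdx n
      · subst hk
        have := hxk (lastIdx n)
        rw [ha3] at this
        simpa using this
      · exact hb3 k hk
    refine ⟨?_, ?_, ?_⟩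
    · refine Prod.ext ?_ (Prod.ext ?_ ?_) <;> simp [ha1, hay, hax]
    · refine Prod.ext ?_ (Prod.ext ?_ ?_) <;> simp [hb1, hby, hbx]
    · refine Prod.ext ?_ (Prod.ext ?_ ?_) <;> simp [ht]
  · intro u hu v hv
    exact brk_g1g1 (g1_le hu) (g1_le hv)
  · intro u hu v hv
    exact brk_g1g2 (g1_le hu) (g2_le hv)
  · intro u _ v hv
    exact brk_g1g3 hv
  · exact gen_top hn
end Part4
end

section
/- For ℏ ≠ 0, the coadjoint orbit of the functional l = ℏZ* ∈ 𝔥_{n,2}* under the Dynin–Folland group equals {ℏZ* + ξ : ξ ∈ span{Z, Y_1,…,Y_{2n+1}, X_1,…,X_{2n+1}}* with ξ(Z) = 0}, i.e., it is an affine subspace of dimension 4n+2. -/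
open scoped BigOperators

/-- `e^{−ad v}` on the (3-step nilpotent) Dynin–Folland Lie algebra:
`w ↦ w − [v,w] + (1/2)[v,[v,w]]` (higher terms vanish). -/
noncomputable def expNegAd {n : ℕ} (v w : DF n) : DF n :=
  w - dfBracket v w + (1/2 : ℝ) • dfBracket v (dfBracket v w)

noncomputable def cFun {n : ℕ} (p : Fin (2*n+1) → ℝ) (i : Fin (2*n+1)) : ℝ :=
  (∑ j : Fin n, if i = idxL j then p (idxR j) else 0)
  - (∑ j : Fin n, if i = idxR j then p (idxL j) else 0)

lemma sum_swap_ite {n m : ℕ} (idx : Fin m → Fin n) (f : Fin n → Fin m → ℝ) :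
    ∑ x : Fin n, ∑ j : Fin m, (if x = idx j then f x j else 0) = ∑ j : Fin m, f (idx j) j := by
  rw [Finset.sum_comm]
  simp [Finset.sum_ite_eq']

lemma sum_ite_single {n : ℕ} (a : Fin n) (f : Fin n → ℝ) :
    ∑ x : Fin n, (if x = a then f x else 0) = f a := by
  simp [Finset.sum_ite_eq']

lemma cFun_last {n : ℕ} (p : Fin (2*n+1) → ℝ) : cFun p (lastIdx n) = 0 := by
  have h1 : ∀ j : Fin n, lastIdx n ≠ idxL j := by
    intro j hE
    have := congrArg Fin.val hE
    simp only [lastIdx, idxL] at this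
    omega
  have h2 : ∀ j : Fin n, lastIdx n ≠ idxR j := by
    intro j hE
    have := congrArg Fin.val hE
    simp only [lastIdx, idxR] at this
    omega
  simp [cFun, h1, h2]

set_option maxHeartbeats 1000000 in
lemma df_key {n : ℕ} (h : ℝ) (p q : Fin (2*n+1) → ℝ) (w : DF n) :
    h * (expNegAd ((0:ℝ), q, p) w).1
      = w.1 * h + (∑ k, w.2.1 k * (-(h * p k)))
        + ∑ k, w.2.2 k * (h * q k + (3/4) * h * q (lastIdx n) * cFun p k) := by
  simp only [expNegAd, dfBracket, cFun, Prod.fst_sub, Prod.fst_add, Prod.smul_fst, smul_eq_mul]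
  simp only [mul_sub, sub_mul, mul_add, add_mul, Finset.mul_sum, Finset.sum_mul,
    Finset.sum_sub_distrib, Finset.sum_add_distrib, mul_ite, ite_mul, mul_zero, zero_mul]
  rw [sum_swap_ite, sum_swap_ite, sum_swap_ite, sum_swap_ite, sum_ite_single]
  ring_nf
  have L1 : (∑ x : Fin (2*n+1), h * p x * w.2.1 x) = h * ∑ x : Fin (2*n+1), p x * w.2.1 x := by
    rw [Finset.mul_sum]; exact Finset.sum_congr rfl fun x _ => by ring
  have L2 : (∑ x : Fin (2*n+1), h * w.2.2 x * q x) = h * ∑ x : Fin (2*n+1), w.2.2 x * q x := by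
    rw [Finset.mul_sum]; exact Finset.sum_congr rfl fun x _ => by ring
  have L3 : (∑ x : Fin n, (h * (1 / 2) * p (idxL x) * (1 / 2) * p (idxR x) * w.2.1 (lastIdx n) -
      h * (1 / 2) * p (idxL x) * (1 / 2) * w.2.2 (idxR x) * q (lastIdx n)))
      = h/4 * w.2.1 (lastIdx n) * (∑ x : Fin n, p (idxL x) * p (idxR x))
        - h/4 * q (lastIdx n) * (∑ x : Fin n, p (idxL x) * w.2.2 (idxR x)) := by
    rw [Finset.mul_sum, Finset.mul_sum, ← Finset.sum_sub_distrib]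
    exact Finset.sum_congr rfl fun x _ => by ring
  have L4 : (∑ x : Fin n, (h * (1 / 2) * p (idxR x) * (1 / 2) * p (idxL x) * w.2.1 (lastIdx n) -
      h * (1 / 2) * p (idxR x) * (1 / 2) * w.2.2 (idxL x) * q (lastIdx n)))
      = h/4 * w.2.1 (lastIdx n) * (∑ x : Fin n, p (idxL x) * p (idxR x))
        - h/4 * q (lastIdx n) * (∑ x : Fin n, w.2.2 (idxL x) * p (idxR x)) := by
    rw [Finset.mul_sum, Finset.mul_sum, ← Finset.sum_sub_distrib]
    exact Finset.sum_congr rfl fun x _ => by ring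
  have L5 : (∑ x : Fin n, h * (1 / 2) * p (idxL x) * w.2.2 (idxR x) * q (lastIdx n))
      = h/2 * q (lastIdx n) * (∑ x : Fin n, p (idxL x) * w.2.2 (idxR x)) := by
    rw [Finset.mul_sum]; exact Finset.sum_congr rfl fun x _ => by ring
  have L6 : (∑ x : Fin n, h * (1 / 2) * w.2.2 (idxL x) * p (idxR x) * q (lastIdx n))
      = h/2 * q (lastIdx n) * (∑ x : Fin n, w.2.2 (idxL x) * p (idxR x)) := by
    rw [Finset.mul_sum]; exact Finset.sum_congr rfl fun x _ => by ring
  have R1 : (∑ x : Fin (2*n+1), -(w.2.1 x * h * p x)) = -(h * ∑ x : Fin (2*n+1), p x * w.2.1 x) := by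
    rw [Finset.mul_sum, ← Finset.sum_neg_distrib]
    exact Finset.sum_congr rfl fun x _ => by ring
  have R2 : (∑ x : Fin (2*n+1), w.2.2 x * h * q x) = h * ∑ x : Fin (2*n+1), w.2.2 x * q x := by
    rw [Finset.mul_sum]; exact Finset.sum_congr rfl fun x _ => by ring
  have R3 : (∑ x : Fin n, w.2.2 (idxL x) * h * (3 / 4) * q (lastIdx n) * p (idxR x))
      = 3/4 * h * q (lastIdx n) * (∑ x : Fin n, w.2.2 (idxL x) * p (idxR x)) := by
    rw [Finset.mul_sum]; exact Finset.sum_congr rfl fun x _ => by ring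
  have R4 : (∑ x : Fin n, w.2.2 (idxR x) * h * (3 / 4) * q (lastIdx n) * p (idxL x))
      = 3/4 * h * q (lastIdx n) * (∑ x : Fin n, p (idxL x) * w.2.2 (idxR x)) := by
    rw [Finset.mul_sum]; exact Finset.sum_congr rfl fun x _ => by ring
  rw [L1, L2]
  have R1' : ∑ x : Fin (2*n+1), -(h * w.2.1 x * p x) = -(h * ∑ x : Fin (2*n+1), p x * w.2.1 x) := by
    rw [Finset.mul_sum, ← Finset.sum_neg_distrib]
    exact Finset.sum_congr rfl fun x _ => by ring
  have key : (∑ x : Fin n, (h * p (idxL x) * p (idxR x) * w.2.1 (lastIdx n) * (1 / 4) +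
        h * p (idxL x) * w.2.2 (idxR x) * q (lastIdx n) * (-1 / 4)))
      - (∑ x : Fin n, (h * w.2.1 (lastIdx n) * p (idxR x) * p (idxL x) * (1 / 4) +
        h * q (lastIdx n) * p (idxR x) * w.2.2 (idxL x) * (-1 / 4)))
      - (∑ x : Fin n, h * q (lastIdx n) * p (idxL x) * w.2.2 (idxR x) * (1 / 2))
      + (∑ x : Fin n, h * q (lastIdx n) * w.2.2 (idxL x) * p (idxR x) * (1 / 2))
      = (∑ x : Fin n, h * q (lastIdx n) * w.2.2 (idxL x) * p (idxR x) * (3 / 4))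
      - (∑ x : Fin n, h * q (lastIdx n) * w.2.2 (idxR x) * p (idxL x) * (3 / 4)) := by
    rw [← Finset.sum_sub_distrib, ← Finset.sum_sub_distrib, ← Finset.sum_add_distrib,
      ← Finset.sum_sub_distrib]
    exact Finset.sum_congr rfl fun x _ => by ring
  linear_combination key - R1'

lemma df_decomp {n : ℕ} (w : DF n) :
    w = w.1 • Zv n + (∑ k, w.2.1 k • Yv k) + (∑ k, w.2.2 k • Xv k) := by
  refine Prod.ext ?_ (Prod.ext ?_ ?_)
  · simp [Zv, Yv, Xv, Prod.fst_sum]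
  · simp only [Prod.snd_add, Prod.fst_add, Prod.snd_sum, Prod.fst_sum, Zv, Yv, Xv,
      Prod.smul_snd, Prod.smul_fst]
    simp [← Pi.single_smul, Finset.univ_sum_single]
  · simp only [Prod.snd_add, Prod.snd_sum, Zv, Yv, Xv, Prod.smul_snd]
    simp [← Pi.single_smul, Finset.univ_sum_single]

lemma df_eval {n : ℕ} (ξ : DF n →ₗ[ℝ] ℝ) (w : DF n) :
    ξ w = w.1 * ξ (Zv n) + (∑ k, w.2.1 k * ξ (Yv k)) + ∑ k, w.2.2 k * ξ (Xv k) := by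
  conv_lhs => rw [df_decomp w]
  simp [map_add, map_sum, map_smul, smul_eq_mul]

/-- for `ℏ ≠ 0`, the coadjoint orbit of `l = ℏZ*` under the (simply
connected, exponential) Dynin–Folland group, i.e. the set of functionals
`l ∘ e^{−ad v}`, `v ∈ 𝔥_{n,2}`, is precisely the flat affine subspace
`l + 𝔷(𝔥_{n,2})^⊥ = {ξ : ξ(Z) = ℏ}` (of dimension 4n+2). -/
theorem df_coadjoint_orbit_flat (n : ℕ) (hn : 1 ≤ n) (h : ℝ) (hh : h ≠ 0) :
    ∀ ξ : DF n →ₗ[ℝ] ℝ,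
      (∃ v : DF n, ∀ w : DF n, ξ w = h * (expNegAd v w).1) ↔ ξ (Zv n) = h := by
  intro ξ
  constructor
  · rintro ⟨v, hv⟩
    have hz := hv (Zv n)
    have hbz : dfBracket v (Zv n) = 0 := by
      refine Prod.ext ?_ (Prod.ext ?_ ?_)
      · simp [dfBracket, Zv]
      · funext i; simp [dfBracket, Zv]
      · funext i; simp [dfBracket, Zv]
    have hb0 : dfBracket v (0 : DF n) = 0 := by
      refine Prod.ext ?_ (Prod.ext ?_ ?_)
      · simp [dfBracket]
      · funext i; simp [dfBracket]
      · funext i; simp [dfBracket]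
    simp only [expNegAd, hbz, hb0] at hz
    simpa [Zv] using hz
  · intro hz
    set p : Fin (2*n+1) → ℝ := fun k => -(ξ (Yv k)) / h with hp
    set q : Fin (2*n+1) → ℝ :=
      fun k => ξ (Xv k) / h - (3/4) * (ξ (Xv (lastIdx n)) / h) * cFun p k with hq
    refine ⟨((0:ℝ), q, p), fun w => ?_⟩
    rw [df_key h p q w, df_eval ξ w, hz]
    have hql : q (lastIdx n) = ξ (Xv (lastIdx n)) / h := by
      simp [hq, cFun_last]
    congr 1
    · congr 1
      exact Finset.sum_congr rfl fun k _ => by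
        rw [hp]; field_simp
    · refine Finset.sum_congr rfl fun k _ => ?_
      rw [hql, hq]
      field_simp
      ring
end
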